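/- arXiv:2410.06856 — 2 statements merged into one kernel-verified Lean document; each statement's English description precedes it below -/
import Mathlib

section
/- Let k ≥ 4 be a power of 2 and let n, m be positive integers with m > 30^(log k + 1). Set p = m^(−1/(log k + 1)) and c = p·n. Then the expected total list size satisfies k·n·(1 + Σ_{d=1}^{log k} c^(2^d − 1)/2^d)·(1 − 37p)^(k−1) ≤ E[Λ] ≤ k·n·(1 + Σ_{d=1}^{log k} c^(2^d − 1)/2^d)·(1 + 37p)^(k−1). -/
/-!
By linearity of expectation, `E[Λ] = ∑_{d ≤ log k} 2^(log k - d) · n^(2^d) · π_d`, where `π_d` is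
the probability that `2^d` independent uniform elements of `⟨m⟩` pass all filters of a subtree of
depth `d`. Let `N_d(s)` count the passing `2^d`-tuples with total sum `s`. Splitting a tuple into
its two halves gives the convolution `N_{d+1}(s) = ∑_{s₁ ∈ ⟨m p^d⟩} N_d(s₁) N_d(s - s₁)` for
`s ∈ ⟨m p^(d+1)⟩`. Since `m p^(log k + 1) = 1`, each window `⟨m p^t⟩`, `t ≤ log k`, has between
`(1 - 3p)·|⟨m⟩| p^t` and `(1 + p)·|⟨m⟩| p^t` elements, and at least `(1 - 3p)·|⟨m⟩| p^t` of them
are admissible as `s₁`. By induction `N_d(s)` lies between the solutions of `x_{d+1} = μ_d x_d²`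
for these two values of `μ_t`, whence
`(1 - 3p)^(2^d) p^(2^d - 1) ≤ π_d ≤ (1 + p)^(2^d) p^(2^d - 1)`. Finally `|1 - 37p| ≤ (1 - 3p)²` and
`(1 + p)² ≤ 1 + 37p` turn these factors into `(1 ∓ 37p)^(k - 1)`.
-/

/-- `⟨s⟩`: the set of integers `{-⌊s/2⌋, …, ⌊s/2⌋}`. -/
noncomputable def intRange (s : ℝ) : Finset ℤ := Finset.Icc (-⌊s / 2⌋) ⌊s / 2⌋

/-- The global index (0-based) of the `r`-th element of the `i`-th block of size `2^d`. -/
def blockIdx {κ : ℕ} (d : ℕ) (hd : d ≤ κ) (i : Fin (2 ^ (κ - d))) (r : Fin (2 ^ d)) :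
    Fin (2 ^ κ) :=
  ⟨(i : ℕ) * 2 ^ d + (r : ℕ), by
    have hr := r.isLt
    have hi : (i : ℕ) + 1 ≤ 2 ^ (κ - d) := i.isLt
    have h1 : ((i : ℕ) + 1) * 2 ^ d ≤ 2 ^ (κ - d) * 2 ^ d := Nat.mul_le_mul hi (le_refl _)
    have h2 : 2 ^ (κ - d) * 2 ^ d = 2 ^ κ := by rw [← pow_add, Nat.sub_add_cancel hd]
    have h3 : ((i : ℕ) + 1) * 2 ^ d = (i : ℕ) * 2 ^ d + 2 ^ d := by ring
    omega⟩

/-- `Λ_{d,i}`: the number of index tuples for the `i`-th block of `2^d` input lists all of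
whose partial block sums at levels `t ∈ {1,…,d}` pass the corresponding filters `⟨m·p^t⟩`;
this is the size of the `i`-th list at level `d` of the k-Tree algorithm. -/
noncomputable def levelListSize (κ n m : ℕ) (p : ℝ) (L : Fin (2 ^ κ) → Fin n → ℤ)
    (d : ℕ) (hd : d ≤ κ) (i : Fin (2 ^ (κ - d))) : ℕ :=
  Nat.card {ℓ : Fin (2 ^ d) → Fin n //
    ∀ t ∈ Finset.Icc 1 d, ∀ j < 2 ^ (d - t),
      (∑ r : Fin (2 ^ d),
          if j * 2 ^ t ≤ (r : ℕ) ∧ (r : ℕ) < (j + 1) * 2 ^ t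
          then L (blockIdx d hd i r) (ℓ r) else 0)
        ∈ intRange ((m : ℝ) * p ^ t)}

/-- `Λ`: the total size of all the lists arising in the run of the k-Tree algorithm. -/
noncomputable def totalSize (κ n m : ℕ) (p : ℝ) (L : Fin (2 ^ κ) → Fin n → ℤ) : ℕ :=
  ∑ d ∈ (Finset.range (κ + 1)).attach,
    ∑ i : Fin (2 ^ (κ - (d : ℕ))),
      levelListSize κ n m p L (d : ℕ) (Nat.lt_succ_iff.mp (Finset.mem_range.mp d.property)) i

/-- The expectation of `Λ` over the uniformly random choice of the `2^κ` input lists of `n`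
entries each from `⟨m⟩`. -/
noncomputable def expTotalSize (κ n m : ℕ) (p : ℝ) : ℝ :=
  (∑ L : Fin (2 ^ κ) → Fin n → ↥(intRange (m : ℝ)),
      (totalSize κ n m p (fun i j => (L i j : ℤ)) : ℝ)) /
    (Fintype.card (Fin (2 ^ κ) → Fin n → ↥(intRange (m : ℝ))) : ℝ)

namespace KTree

open Finset

def blockSum (x : ℕ → ℤ) (t j : ℕ) : ℤ :=
  ∑ r ∈ range (2 ^ t), x (j * 2 ^ t + r)

def PassesFilters (A : ℕ → Finset ℤ) (d : ℕ) (x : ℕ → ℤ) : Prop :=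
  ∀ t ∈ Icc 1 d, ∀ j < 2 ^ (d - t), blockSum x t j ∈ A t

lemma blockSum_two_pow_add {t d : ℕ} (ht : t ≤ d) (x : ℕ → ℤ) (j : ℕ) :
    blockSum x t (2 ^ (d - t) + j) = blockSum (fun r => x (2 ^ d + r)) t j := by
  have h : 2 ^ (d - t) * 2 ^ t = 2 ^ d := by rw [← pow_add, Nat.sub_add_cancel ht]
  simp only [blockSum, add_mul, h, add_assoc]

lemma passesFilters_succ {A : ℕ → Finset ℤ} {d : ℕ} {x : ℕ → ℤ} :
    PassesFilters A (d + 1) x ↔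
      PassesFilters A d x ∧ PassesFilters A d (fun r => x (2 ^ d + r)) ∧
        blockSum x (d + 1) 0 ∈ A (d + 1) := by
  have hpow : ∀ t ≤ d, 2 ^ (d + 1 - t) = 2 ^ (d - t) + 2 ^ (d - t) := fun t ht => by
    rw [Nat.sub_add_comm ht, Nat.two_pow_succ]
  constructor
  · intro h
    refine ⟨fun t ht j hj => ?_, fun t ht j hj => ?_, h (d + 1) (by simp) 0 (by simp)⟩
    · have ht' := (mem_Icc.mp ht).2
      exact h t (by simp only [mem_Icc] at ht ⊢; omega) j (by rw [hpow t ht']; omega)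
    · have ht' := (mem_Icc.mp ht).2
      rw [← blockSum_two_pow_add ht']
      exact h t (by simp only [mem_Icc] at ht ⊢; omega) _ (by rw [hpow t ht']; omega)
  · rintro ⟨hleft, hright, htop⟩ t ht j hj
    obtain ⟨ht1, ht2⟩ := mem_Icc.mp ht
    rcases Nat.lt_or_eq_of_le ht2 with ht2 | rfl
    · have ht' : t ≤ d := Nat.lt_succ_iff.mp ht2
      rw [hpow t ht'] at hj
      by_cases hjl : j < 2 ^ (d - t)
      · exact hleft t (mem_Icc.mpr ⟨ht1, ht'⟩) j hjl
      · obtain ⟨j', rfl⟩ := Nat.exists_eq_add_of_le (not_lt.mp hjl)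
        rw [blockSum_two_pow_add ht']
        exact hright t (mem_Icc.mpr ⟨ht1, ht'⟩) j' (by omega)
    · obtain rfl : j = 0 := by simpa using hj
      exact htop

lemma blockSum_congr {x x' : ℕ → ℤ} {t j : ℕ} (h : ∀ r < (j + 1) * 2 ^ t, x r = x' r) :
    blockSum x t j = blockSum x' t j :=
  sum_congr rfl fun r hr => h _ (by rw [mem_range] at hr; rw [add_mul, one_mul]; omega)

lemma passesFilters_congr {A : ℕ → Finset ℤ} {d : ℕ} {x x' : ℕ → ℤ}
    (h : ∀ r < 2 ^ d, x r = x' r) : PassesFilters A d x ↔ PassesFilters A d x' := by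
  refine forall₂_congr fun t ht => forall₂_congr fun j hj => ?_
  have ht' := (mem_Icc.mp ht).2
  rw [blockSum_congr fun r hr => h r (lt_of_lt_of_le hr ?_)]
  calc (j + 1) * 2 ^ t ≤ 2 ^ (d - t) * 2 ^ t := Nat.mul_le_mul_right _ hj
    _ = 2 ^ d := by rw [← pow_add, Nat.sub_add_cancel ht']

def extendByZero {N : ℕ} (y : Fin N → ℤ) (r : ℕ) : ℤ :=
  if h : r < N then y ⟨r, h⟩ else 0

lemma blockSum_extendByZero {d : ℕ} (y : Fin (2 ^ d) → ℤ) :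
    blockSum (extendByZero y) d 0 = ∑ r, y r := by
  rw [blockSum, ← Fin.sum_univ_eq_sum_range]
  simp [extendByZero]

def halves (α : Type*) (d : ℕ) : (Fin (2 ^ (d + 1)) → α) ≃ (Fin (2 ^ d) → α) × (Fin (2 ^ d) → α) :=
  ((finCongr (Nat.two_pow_succ d)).arrowCongr (Equiv.refl α)).trans (Fin.appendEquiv _ _).symm

lemma halves_fst_apply {α : Type*} {d : ℕ} (y : Fin (2 ^ (d + 1)) → α) (r : Fin (2 ^ d)) :
    (halves α d y).1 r = y ⟨r, by rw [Nat.two_pow_succ]; omega⟩ := rfl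

lemma halves_snd_apply {α : Type*} {d : ℕ} (y : Fin (2 ^ (d + 1)) → α) (r : Fin (2 ^ d)) :
    (halves α d y).2 r = y ⟨2 ^ d + r, by rw [Nat.two_pow_succ]; omega⟩ := rfl

lemma sum_halves {M : Type*} [AddCommMonoid M] {d : ℕ} (y : Fin (2 ^ (d + 1)) → M) :
    ∑ r, y r = ∑ r, (halves M d y).1 r + ∑ r, (halves M d y).2 r :=
  (Fintype.sum_equiv (finCongr (Nat.two_pow_succ d)) y _ fun _ => rfl).trans
    (Fin.sum_univ_add fun i => y ((finCongr (Nat.two_pow_succ d)).symm i))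

lemma passesFilters_succ_iff_halves {A : ℕ → Finset ℤ} {d : ℕ} (y : Fin (2 ^ (d + 1)) → ℤ) :
    PassesFilters A (d + 1) (extendByZero y) ↔
      PassesFilters A d (extendByZero (halves ℤ d y).1) ∧
        PassesFilters A d (extendByZero (halves ℤ d y).2) ∧ ∑ r, y r ∈ A (d + 1) := by
  have h2 := Nat.two_pow_succ d
  have hfst : ∀ r < 2 ^ d, extendByZero (halves ℤ d y).1 r = extendByZero y r := fun r hr => by
    simp [extendByZero, halves_fst_apply, hr, show r < 2 ^ (d + 1) by omega]
  have hsnd : ∀ r < 2 ^ d, extendByZero (halves ℤ d y).2 r = extendByZero y (2 ^ d + r) :=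
    fun r hr => by simp [extendByZero, halves_snd_apply, hr, show 2 ^ d + r < 2 ^ (d + 1) by omega]
  rw [passesFilters_succ, blockSum_extendByZero, passesFilters_congr hfst,
    passesFilters_congr hsnd]

lemma card_add_eq_sum_mul {α β : Type*} [Fintype α] [Fintype β] (P : α → Prop) (Q : β → Prop)
    (f : α → ℤ) (g : β → ℤ) (T : Finset ℤ) (hT : ∀ a, P a → f a ∈ T) (s : ℤ) :
    Nat.card {ab : α × β // (P ab.1 ∧ Q ab.2) ∧ f ab.1 + g ab.2 = s} =
      ∑ s₁ ∈ T, Nat.card {a // P a ∧ f a = s₁} * Nat.card {b // Q b ∧ g b = s - s₁} := by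
  classical
  simp only [Nat.card_eq_fintype_card, Fintype.card_subtype]
  rw [card_eq_sum_card_fiberwise (f := fun ab => f ab.1) (t := T) fun ab hab =>
    hT _ (mem_filter.mp hab).2.1.1]
  refine sum_congr rfl fun s₁ _ => ?_
  rw [← card_product, ← filter_product, filter_filter, univ_product_univ]
  congr 1
  ext ⟨a, b⟩
  simp only [mem_filter, mem_univ, true_and]
  constructor
  · rintro ⟨⟨⟨hP, hQ⟩, hs⟩, rfl⟩; exact ⟨⟨hP, rfl⟩, hQ, by omega⟩
  · rintro ⟨⟨hP, rfl⟩, hQ, hs⟩; exact ⟨⟨⟨hP, hQ⟩, by omega⟩, rfl⟩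

section Counting

variable (A : ℕ → Finset ℤ)

noncomputable def survivorCount (d : ℕ) : ℕ :=
  Nat.card {y : Fin (2 ^ d) → A 0 // PassesFilters A d (extendByZero (y ·))}

noncomputable def filteredCount (d : ℕ) (s : ℤ) : ℕ :=
  Nat.card {y : Fin (2 ^ d) → A 0 // PassesFilters A d (extendByZero (y ·)) ∧ ∑ r, (y r : ℤ) = s}

variable {A}

lemma sum_mem_of_passesFilters {d : ℕ} (y : Fin (2 ^ d) → A 0)
    (hy : PassesFilters A d (extendByZero (y ·))) : ∑ r, (y r : ℤ) ∈ A d := by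
  rcases d with _ | d
  · simp
  · simpa [blockSum_extendByZero] using hy (d + 1) (by simp) 0 (by simp)

lemma filteredCount_zero (s : ℤ) : filteredCount A 0 s = if s ∈ A 0 then 1 else 0 := by
  have e : {y : Fin (2 ^ 0) → A 0 // PassesFilters A 0 (extendByZero (y ·)) ∧ ∑ r, (y r : ℤ) = s}
      ≃ {v : A 0 // (v : ℤ) = s} :=
    (Equiv.funUnique (Fin 1) (A 0)).subtypeEquiv fun y => by simp [PassesFilters]
  rw [filteredCount, Nat.card_congr e]
  split_ifs with h
  · exact Nat.card_eq_one_iff_exists.mpr ⟨⟨⟨s, h⟩, rfl⟩, fun ⟨⟨v, hv⟩, hvs⟩ => by subst hvs; rfl⟩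
  · exact Nat.card_eq_zero.mpr (Or.inl ⟨fun ⟨⟨v, hv⟩, hvs⟩ => h (hvs ▸ hv)⟩)

lemma filteredCount_eq_zero {d : ℕ} {s : ℤ} (hs : s ∉ A d) : filteredCount A d s = 0 :=
  Nat.card_eq_zero.mpr <| Or.inl ⟨fun ⟨y, hy, hsum⟩ => hs (hsum ▸ sum_mem_of_passesFilters y hy)⟩

lemma filteredCount_succ {d : ℕ} {s : ℤ} (hs : s ∈ A (d + 1)) :
    filteredCount A (d + 1) s = ∑ s₁ ∈ A d, filteredCount A d s₁ * filteredCount A d (s - s₁) := by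
  let P : (Fin (2 ^ d) → A 0) → Prop := fun y => PassesFilters A d (extendByZero (y ·))
  have e : {y : Fin (2 ^ (d + 1)) → A 0 //
        PassesFilters A (d + 1) (extendByZero (y ·)) ∧ ∑ r, (y r : ℤ) = s} ≃
      {ab : (Fin (2 ^ d) → A 0) × (Fin (2 ^ d) → A 0) //
        (P ab.1 ∧ P ab.2) ∧ ∑ r, (ab.1 r : ℤ) + ∑ r, (ab.2 r : ℤ) = s} :=
    (halves (A 0) d).subtypeEquiv fun y => by
      rw [passesFilters_succ_iff_halves, sum_halves (fun r => (y r : ℤ))]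
      constructor
      · rintro ⟨⟨h1, h2, -⟩, hs'⟩; exact ⟨⟨h1, h2⟩, hs'⟩
      · rintro ⟨⟨h1, h2⟩, hs'⟩; exact ⟨⟨h1, h2, hs' ▸ hs⟩, hs'⟩
  rw [filteredCount, Nat.card_congr e,
    card_add_eq_sum_mul P P (fun a => ∑ r, (a r : ℤ)) (fun a => ∑ r, (a r : ℤ)) (A d)
      fun y hy => sum_mem_of_passesFilters y hy]
  rfl

lemma survivorCount_eq_sum (d : ℕ) : survivorCount A d = ∑ s ∈ A d, filteredCount A d s := by
  classical
  simp only [survivorCount, filteredCount, Nat.card_eq_fintype_card, Fintype.card_subtype]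
  rw [card_eq_sum_card_fiberwise (f := fun y => ∑ r, (y r : ℤ)) (t := A d) fun y hy =>
    sum_mem_of_passesFilters y (mem_filter.mp hy).2]
  simp only [filter_filter]

end Counting

def tower (μ : ℕ → ℝ) : ℕ → ℝ
  | 0 => 1
  | d + 1 => μ d * tower μ d ^ 2

lemma tower_nonneg {μ : ℕ → ℝ} {d : ℕ} (hμ : ∀ t < d, 0 ≤ μ t) : 0 ≤ tower μ d := by
  induction d with
  | zero => exact zero_le_one
  | succ d ih => exact mul_nonneg (hμ d d.lt_succ_self) (sq_nonneg _)

lemma mul_pow_mul_tower (a p : ℝ) (d : ℕ) :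
    a * p ^ d * tower (fun t => a * p ^ t) d = a ^ 2 ^ d * p ^ (2 ^ d - 1) := by
  induction d with
  | zero => simp [tower]
  | succ d ih =>
    have h : 2 ^ (d + 1) - 1 = (2 ^ d - 1) * 2 + 1 := by
      have := Nat.one_le_two_pow (n := d); rw [pow_succ]; omega
    calc a * p ^ (d + 1) * tower (fun t => a * p ^ t) (d + 1)
        = p * (a * p ^ d * tower (fun t => a * p ^ t) d) ^ 2 := by simp only [tower]; ring
      _ = a ^ 2 ^ (d + 1) * p ^ (2 ^ (d + 1) - 1) := by
        rw [ih, h, pow_succ 2 d, pow_mul, pow_succ p, pow_mul]; ring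

section Bounds

variable {A : ℕ → Finset ℤ}

lemma filteredCount_le_tower {β : ℕ → ℝ} {d : ℕ} (hβ : ∀ t < d, (#(A t) : ℝ) ≤ β t) (s : ℤ) :
    (filteredCount A d s : ℝ) ≤ tower β d := by
  induction d generalizing s with
  | zero => rw [filteredCount_zero]; split_ifs <;> simp [tower]
  | succ d ih =>
    have ih := ih fun t ht => hβ t (ht.trans d.lt_succ_self)
    have hβd := hβ d d.lt_succ_self
    have hT : 0 ≤ tower β d := (Nat.cast_nonneg _).trans (ih 0)
    by_cases hs : s ∈ A (d + 1)
    · rw [filteredCount_succ hs]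
      push_cast
      calc ∑ s₁ ∈ A d, (filteredCount A d s₁ : ℝ) * filteredCount A d (s - s₁)
          ≤ ∑ _s₁ ∈ A d, tower β d ^ 2 :=
            sum_le_sum fun s₁ _ => sq (tower β d) ▸ mul_le_mul (ih s₁) (ih _) (by positivity) hT
        _ = #(A d) * tower β d ^ 2 := by rw [sum_const, nsmul_eq_mul]
        _ ≤ tower β (d + 1) := by simp only [tower]; gcongr
    · rw [filteredCount_eq_zero hs, Nat.cast_zero]
      exact mul_nonneg ((Nat.cast_nonneg _).trans hβd) (sq_nonneg _)

lemma tower_le_filteredCount {α : ℕ → ℝ} {d : ℕ} (hα₀ : ∀ t < d, 0 ≤ α t)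
    (hα : ∀ t < d, ∀ s ∈ A (t + 1), α t ≤ #{s₁ ∈ A t | s - s₁ ∈ A t}) {s : ℤ} (hs : s ∈ A d) :
    tower α d ≤ filteredCount A d s := by
  induction d generalizing s with
  | zero => simp [filteredCount_zero, hs, tower]
  | succ d ih =>
    have ih : ∀ {s}, s ∈ A d → tower α d ≤ filteredCount A d s :=
      ih (fun t ht => hα₀ t (ht.trans d.lt_succ_self)) fun t ht => hα t (ht.trans d.lt_succ_self)
    have hT : 0 ≤ tower α d := tower_nonneg fun t ht => hα₀ t (ht.trans d.lt_succ_self)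
    rw [filteredCount_succ hs]
    push_cast
    calc tower α (d + 1) ≤ #{s₁ ∈ A d | s - s₁ ∈ A d} * tower α d ^ 2 := by
          simp only [tower]; gcongr; exact hα d d.lt_succ_self s hs
      _ = ∑ _s₁ ∈ A d with s - _s₁ ∈ A d, tower α d ^ 2 := by rw [sum_const, nsmul_eq_mul]
      _ ≤ ∑ s₁ ∈ A d with s - s₁ ∈ A d, (filteredCount A d s₁ : ℝ) * filteredCount A d (s - s₁) :=
          sum_le_sum fun s₁ hs₁ => sq (tower α d) ▸
            mul_le_mul (ih (mem_filter.mp hs₁).1) (ih (mem_filter.mp hs₁).2) hT (by positivity)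
      _ ≤ ∑ s₁ ∈ A d, (filteredCount A d s₁ : ℝ) * filteredCount A d (s - s₁) :=
          sum_le_sum_of_subset_of_nonneg (filter_subset _ _) fun _ _ _ => by positivity

lemma survivorCount_le {β : ℕ → ℝ} {d : ℕ} (hβ : ∀ t < d, (#(A t) : ℝ) ≤ β t) :
    (survivorCount A d : ℝ) ≤ #(A d) * tower β d := by
  rw [survivorCount_eq_sum, Nat.cast_sum, ← nsmul_eq_mul]
  exact sum_le_card_nsmul _ _ _ fun s _ => filteredCount_le_tower hβ s

lemma le_survivorCount {α : ℕ → ℝ} {d : ℕ} (hα₀ : ∀ t < d, 0 ≤ α t)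
    (hα : ∀ t < d, ∀ s ∈ A (t + 1), α t ≤ #{s₁ ∈ A t | s - s₁ ∈ A t}) :
    #(A d) * tower α d ≤ survivorCount A d := by
  rw [survivorCount_eq_sum, Nat.cast_sum, ← nsmul_eq_mul]
  exact card_nsmul_le_sum _ _ _ fun s hs => tower_le_filteredCount hα₀ hα hs

end Bounds

noncomputable def passProb (A : ℕ → Finset ℤ) (d : ℕ) : ℝ :=
  survivorCount A d / (#(A 0) : ℝ) ^ 2 ^ d

lemma passProb_zero {A : ℕ → Finset ℤ} (hA : (A 0).Nonempty) : passProb A 0 = 1 := by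
  rw [passProb, survivorCount_eq_sum]
  simp [filteredCount_zero, hA.ne_empty]

lemma intRange_nonempty {s : ℝ} (hs : 0 ≤ s) : (intRange s).Nonempty :=
  ⟨0, by simp only [intRange, mem_Icc, Left.neg_nonpos_iff, and_self]; positivity⟩

lemma le_card_filter_sub_mem_Icc (W U z : ℤ) (hz : |z| ≤ U) :
    2 * W + 1 - U ≤ (#{s₁ ∈ Icc (-W) W | z - s₁ ∈ Icc (-W) W} : ℤ) := by
  have h : {s₁ ∈ Icc (-W) W | z - s₁ ∈ Icc (-W) W} = Icc (max (-W) (z - W)) (min W (z + W)) := by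
    ext; simp only [mem_filter, mem_Icc, max_le_iff, le_min_iff]; omega
  rw [h, Int.card_Icc, max_def, min_def]
  have := abs_le.mp hz
  split_ifs <;> omega

lemma card_intRange {s : ℝ} (hs : 0 ≤ s) : (#(intRange s) : ℝ) = 2 * ⌊s / 2⌋ + 1 := by
  have h0 : 0 ≤ ⌊s / 2⌋ := Int.floor_nonneg.mpr (by positivity)
  have h : (#(intRange s) : ℤ) = 2 * ⌊s / 2⌋ + 1 := by rw [intRange, Int.card_Icc]; omega
  exact_mod_cast h

lemma natCast_le_card_intRange (m : ℕ) : (m : ℝ) ≤ #(intRange m) := by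
  have h := Int.sub_one_lt_floor ((m : ℝ) / 2)
  have h' : (m : ℝ) < #(intRange m) + 1 := by rw [card_intRange m.cast_nonneg]; linarith
  exact_mod_cast Nat.lt_succ_iff.mp (by exact_mod_cast h')

lemma card_intRange_le (m : ℕ) : (#(intRange m) : ℝ) ≤ m + 1 := by
  rw [card_intRange m.cast_nonneg]; linarith [Int.floor_le ((m : ℝ) / 2)]

lemma le_card_filter_sub_mem_intRange {u v : ℝ} {z : ℤ} (hz : z ∈ intRange u) :
    v - 1 - u / 2 ≤ #{s₁ ∈ intRange v | z - s₁ ∈ intRange v} := by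
  have hW := Int.sub_one_lt_floor (v / 2)
  have hU := Int.floor_le (u / 2)
  have h := le_card_filter_sub_mem_Icc ⌊v / 2⌋ ⌊u / 2⌋ z (abs_le.mpr (mem_Icc.mp hz))
  have h' : (2 * ⌊v / 2⌋ + 1 - ⌊u / 2⌋ : ℝ) ≤ #{s₁ ∈ intRange v | z - s₁ ∈ intRange v} := by
    exact_mod_cast h
  linarith

/-- Level `0` is `⟨m⟩` itself rather than `⟨m·p^0⟩`, so that `kTreeWindow m p 0` is
definitionally the type of the list entries. -/
noncomputable def kTreeWindow (m : ℕ) (p : ℝ) : ℕ → Finset ℤ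
  | 0 => intRange m
  | t + 1 => intRange (m * p ^ (t + 1))

lemma kTreeWindow_zero (m : ℕ) (p : ℝ) : kTreeWindow m p 0 = intRange m := rfl

lemma kTreeWindow_eq (m : ℕ) (p : ℝ) (t : ℕ) : kTreeWindow m p t = intRange (m * p ^ t) := by
  cases t <;> simp [kTreeWindow]

section Window

variable {m κ t : ℕ} {p : ℝ}

lemma one_le_mul_pow_succ (hp₀ : 0 < p) (hp₁ : p ≤ 1) (hmp : 1 ≤ m * p ^ (κ + 1)) (ht : t ≤ κ) :
    1 ≤ p * (m * p ^ t) :=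
  calc 1 ≤ m * p ^ (κ + 1) := hmp
    _ ≤ m * p ^ (t + 1) :=
      mul_le_mul_of_nonneg_left (pow_le_pow_of_le_one hp₀.le hp₁ (by omega)) m.cast_nonneg
    _ = p * (m * p ^ t) := by ring

lemma card_intRange_mul_pow_le (hp₀ : 0 < p) (hp : p ≤ 1 / 3) (hmp : 1 ≤ m * p ^ (κ + 1))
    (ht : t ≤ κ) : #(intRange m) * p ^ t ≤ (1 + p) * (m * p ^ t) := by
  have h1 := one_le_mul_pow_succ hp₀ (by linarith) hmp ht
  have h2 : p ^ t ≤ 1 := pow_le_one₀ hp₀.le (by linarith)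
  nlinarith [card_intRange_le m, pow_pos hp₀ t]

lemma card_kTreeWindow_le (hp₀ : 0 < p) (hp : p ≤ 1 / 3) (hmp : 1 ≤ m * p ^ (κ + 1))
    (ht : t ≤ κ) :
    (#(kTreeWindow m p t) : ℝ) ≤ #(intRange m) * (1 + p) * p ^ t := by
  have h1 := one_le_mul_pow_succ hp₀ (by linarith) hmp ht
  have h2 : m * p ^ t ≤ #(intRange m) * p ^ t :=
    mul_le_mul_of_nonneg_right (natCast_le_card_intRange m) (by positivity)
  calc (#(kTreeWindow m p t) : ℝ) ≤ m * p ^ t + 1 := by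
        rw [kTreeWindow_eq, card_intRange (by positivity)]
        linarith [Int.floor_le ((m * p ^ t) / 2)]
    _ ≤ (1 + p) * (m * p ^ t) := by linarith
    _ ≤ (1 + p) * (#(intRange m) * p ^ t) := by gcongr
    _ = #(intRange m) * (1 + p) * p ^ t := by ring

lemma le_card_kTreeWindow (hp₀ : 0 < p) (hp : p ≤ 1 / 3) (hmp : 1 ≤ m * p ^ (κ + 1))
    (ht : t ≤ κ) :
    #(intRange m) * (1 - 3 * p) * p ^ t ≤ (#(kTreeWindow m p t) : ℝ) := by
  have h1 := one_le_mul_pow_succ hp₀ (by linarith) hmp ht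
  calc #(intRange m) * (1 - 3 * p) * p ^ t ≤ (1 - 3 * p) * ((1 + p) * (m * p ^ t)) := by
        rw [mul_right_comm, mul_comm]
        exact mul_le_mul_of_nonneg_left (card_intRange_mul_pow_le hp₀ hp hmp ht) (by linarith)
    _ ≤ m * p ^ t - 1 := by nlinarith [mul_pos hp₀ hp₀]
    _ ≤ (#(kTreeWindow m p t) : ℝ) := by
        rw [kTreeWindow_eq, card_intRange (by positivity)]
        linarith [Int.sub_one_lt_floor ((m * p ^ t) / 2)]

lemma le_card_filter_sub_mem_kTreeWindow (hp₀ : 0 < p) (hp : p ≤ 1 / 3) (hmp : 1 ≤ m * p ^ (κ + 1))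
    (ht : t ≤ κ) {s : ℤ} (hs : s ∈ kTreeWindow m p (t + 1)) :
    #(intRange m) * (1 - 3 * p) * p ^ t ≤
      (#{s₁ ∈ kTreeWindow m p t | s - s₁ ∈ kTreeWindow m p t} : ℝ) := by
  have h1 := one_le_mul_pow_succ hp₀ (by linarith) hmp ht
  rw [kTreeWindow_eq] at hs ⊢
  calc #(intRange m) * (1 - 3 * p) * p ^ t ≤ (1 - 3 * p) * ((1 + p) * (m * p ^ t)) := by
        rw [mul_right_comm, mul_comm]
        exact mul_le_mul_of_nonneg_left (card_intRange_mul_pow_le hp₀ hp hmp ht) (by linarith)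
    _ ≤ m * p ^ t - 1 - m * p ^ (t + 1) / 2 := by rw [pow_succ]; nlinarith [mul_pos hp₀ hp₀]
    _ ≤ _ := le_card_filter_sub_mem_intRange hs

lemma passProb_kTreeWindow_le (hp₀ : 0 < p) (hp : p ≤ 1 / 3) (hmp : 1 ≤ m * p ^ (κ + 1))
    {d : ℕ} (hd : d ≤ κ) : passProb (kTreeWindow m p) d ≤ p ^ (2 ^ d - 1) * (1 + p) ^ 2 ^ d := by
  set M : ℝ := ((intRange m).card : ℝ)
  have hM : 0 < M := Nat.cast_pos.mpr (intRange_nonempty m.cast_nonneg).card_pos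
  have hβ : ∀ t < d, (#(kTreeWindow m p t) : ℝ) ≤ M * (1 + p) * p ^ t := fun t ht =>
    card_kTreeWindow_le hp₀ hp hmp (ht.le.trans hd)
  rw [passProb, kTreeWindow_zero, div_le_iff₀ (by positivity)]
  calc (survivorCount (kTreeWindow m p) d : ℝ)
      ≤ #(kTreeWindow m p d) * tower (fun t => M * (1 + p) * p ^ t) d := survivorCount_le hβ
    _ ≤ M * (1 + p) * p ^ d * tower (fun t => M * (1 + p) * p ^ t) d :=
        mul_le_mul_of_nonneg_right (card_kTreeWindow_le hp₀ hp hmp hd)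
          (tower_nonneg fun t _ => by positivity)
    _ = p ^ (2 ^ d - 1) * (1 + p) ^ 2 ^ d * M ^ 2 ^ d := by rw [mul_pow_mul_tower, mul_pow]; ring

lemma le_passProb_kTreeWindow (hp₀ : 0 < p) (hp : p ≤ 1 / 3) (hmp : 1 ≤ m * p ^ (κ + 1))
    {d : ℕ} (hd : d ≤ κ) :
    p ^ (2 ^ d - 1) * (1 - 3 * p) ^ 2 ^ d ≤ passProb (kTreeWindow m p) d := by
  set M : ℝ := ((intRange m).card : ℝ)
  have hM : 0 < M := Nat.cast_pos.mpr (intRange_nonempty m.cast_nonneg).card_pos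
  have hα₀ : ∀ t < d, 0 ≤ M * (1 - 3 * p) * p ^ t := fun t _ =>
    mul_nonneg (mul_nonneg hM.le (by linarith)) (by positivity)
  have hα : ∀ t < d, ∀ s ∈ kTreeWindow m p (t + 1), M * (1 - 3 * p) * p ^ t ≤
      #{s₁ ∈ kTreeWindow m p t | s - s₁ ∈ kTreeWindow m p t} := fun t ht _ hs =>
    le_card_filter_sub_mem_kTreeWindow hp₀ hp hmp (ht.le.trans hd) hs
  rw [passProb, kTreeWindow_zero, le_div_iff₀ (by positivity)]
  calc p ^ (2 ^ d - 1) * (1 - 3 * p) ^ 2 ^ d * M ^ 2 ^ d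
      = M * (1 - 3 * p) * p ^ d * tower (fun t => M * (1 - 3 * p) * p ^ t) d := by
        rw [mul_pow_mul_tower, mul_pow]; ring
    _ ≤ #(kTreeWindow m p d) * tower (fun t => M * (1 - 3 * p) * p ^ t) d :=
        mul_le_mul_of_nonneg_right (le_card_kTreeWindow hp₀ hp hmp hd) (tower_nonneg hα₀)
    _ ≤ survivorCount (kTreeWindow m p) d := le_survivorCount hα₀ hα

end Window

lemma pow_le_pow_of_abs_le_sq {x y : ℝ} {N k : ℕ} (hy₀ : 0 ≤ y) (hy₁ : y ≤ 1) (hxy : |x| ≤ y ^ 2)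
    (hk : k ≤ 2 * N) : x ^ N ≤ y ^ k :=
  calc x ^ N ≤ |x| ^ N := (le_abs_self _).trans (abs_pow x N).le
    _ ≤ (y ^ 2) ^ N := pow_le_pow_left₀ (abs_nonneg x) hxy N
    _ = y ^ (2 * N) := (pow_mul y 2 N).symm
    _ ≤ y ^ k := pow_le_pow_of_le_one hy₀ hy₁ hk

lemma pow_le_pow_of_sq_le {x y : ℝ} {N k : ℕ} (hy : 1 ≤ y) (hxy : y ^ 2 ≤ x) (hk : k ≤ 2 * N) :
    y ^ k ≤ x ^ N :=
  calc y ^ k ≤ y ^ (2 * N) := pow_le_pow_right₀ hy hk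
    _ = (y ^ 2) ^ N := pow_mul y 2 N
    _ ≤ x ^ N := pow_le_pow_left₀ (by positivity) hxy N

lemma passProb_kTreeWindow_bounds {m κ d : ℕ} {p : ℝ} (hp₀ : 0 < p) (hp : p < 1 / 30)
    (hmp : 1 ≤ m * p ^ (κ + 1)) (hd : d ≤ κ) :
    p ^ (2 ^ d - 1) * (1 - 37 * p) ^ (2 ^ κ - 1) ≤ passProb (kTreeWindow m p) d ∧
      passProb (kTreeWindow m p) d ≤ p ^ (2 ^ d - 1) * (1 + 37 * p) ^ (2 ^ κ - 1) := by
  rcases Nat.eq_zero_or_pos d with rfl | hd₀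
  · rw [passProb_zero (intRange_nonempty m.cast_nonneg), pow_zero, Nat.sub_self, pow_zero,
      one_mul, one_mul]
    have h := pow_le_pow_of_abs_le_sq (x := 1 - 37 * p) (N := 2 ^ κ - 1) zero_le_one le_rfl
      (by rw [one_pow]; exact abs_le.mpr ⟨by linarith, by linarith⟩) (Nat.zero_le _)
    exact ⟨by rwa [pow_zero] at h, one_le_pow₀ (by linarith)⟩
  have hk : 2 ^ d ≤ 2 * (2 ^ κ - 1) := by
    have := Nat.pow_le_pow_right two_pos hd
    have := Nat.pow_le_pow_right two_pos (hd₀.trans_le hd)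
    omega
  constructor
  · calc p ^ (2 ^ d - 1) * (1 - 37 * p) ^ (2 ^ κ - 1) ≤ p ^ (2 ^ d - 1) * (1 - 3 * p) ^ 2 ^ d := by
          gcongr
          exact pow_le_pow_of_abs_le_sq (by linarith) (by linarith)
            (abs_le.mpr ⟨by nlinarith, by nlinarith⟩) hk
      _ ≤ passProb (kTreeWindow m p) d := le_passProb_kTreeWindow hp₀ (by linarith) hmp hd
  · calc passProb (kTreeWindow m p) d ≤ p ^ (2 ^ d - 1) * (1 + p) ^ 2 ^ d :=
          passProb_kTreeWindow_le hp₀ (by linarith) hmp hd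
      _ ≤ p ^ (2 ^ d - 1) * (1 + 37 * p) ^ (2 ^ κ - 1) := by
          gcongr
          exact pow_le_pow_of_sq_le (by linarith) (by nlinarith) hk

lemma sum_card_subtype_comm {α β : Type*} [Fintype α] [Fintype β] (P : α → β → Prop) :
    ∑ a, Nat.card {b // P a b} = ∑ b, Nat.card {a // P a b} := by
  classical
  simp only [Nat.card_eq_fintype_card, Fintype.card_subtype, card_filter]
  exact sum_comm

lemma card_subtype_comp_div_card {α β W : Type*} [Fintype α] [Fintype β] [Fintype W] [Nonempty W]
    {e : α → β} (he : Function.Injective e) (Q : (α → W) → Prop) :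
    (Nat.card {f : β → W // Q (f ∘ e)} : ℝ) / Nat.card (β → W) =
      Nat.card {g : α → W // Q g} / Nat.card (α → W) := by
  classical
  let E : (β → W) ≃ (α → W) × ({b // b ∉ Set.range e} → W) :=
    (Equiv.piEquivPiSubtypeProd (· ∈ Set.range e) _).trans
      ((Equiv.arrowCongr (Equiv.ofInjective e he).symm (Equiv.refl W)).prodCongr (Equiv.refl _))
  have hQ : Nat.card {f : β → W // Q (f ∘ e)} =
      Nat.card {g : α → W // Q g} * Nat.card ({b // b ∉ Set.range e} → W) := by
    rw [← Nat.card_prod, ← Nat.card_congr Equiv.prodSubtypeFstEquivSubtypeProd]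
    exact Nat.card_congr (E.subtypeEquiv fun f => Iff.rfl)
  rw [hQ, Nat.card_congr E, Nat.card_prod, Nat.cast_mul, Nat.cast_mul, mul_div_mul_right]
  exact Nat.cast_ne_zero.mpr Nat.card_pos.ne'

lemma indicator_sum_eq_blockSum {d t j : ℕ} (ht : t ≤ d) (hj : j < 2 ^ (d - t))
    (y : Fin (2 ^ d) → ℤ) :
    (∑ r : Fin (2 ^ d), if j * 2 ^ t ≤ (r : ℕ) ∧ (r : ℕ) < (j + 1) * 2 ^ t then y r else 0) =
      blockSum (extendByZero y) t j := by
  have hb : (j + 1) * 2 ^ t ≤ 2 ^ d :=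
    (Nat.mul_le_mul_right _ hj).trans (by rw [← pow_add, Nat.sub_add_cancel ht])
  calc _ = ∑ r ∈ range (2 ^ d),
        if j * 2 ^ t ≤ r ∧ r < (j + 1) * 2 ^ t then extendByZero y r else 0 := by
        rw [← Fin.sum_univ_eq_sum_range]; simp [extendByZero]
    _ = ∑ r ∈ Ico (j * 2 ^ t) ((j + 1) * 2 ^ t), extendByZero y r := by
        rw [← sum_filter]; congr 1; ext r; simp only [mem_filter, mem_range, mem_Ico]; omega
    _ = blockSum (extendByZero y) t j := by
        rw [sum_Ico_eq_sum_range, blockSum, add_mul, one_mul, Nat.add_sub_cancel_left]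

lemma levelListSize_eq (κ n m : ℕ) (p : ℝ) (L : Fin (2 ^ κ) → Fin n → ℤ) (d : ℕ) (hd : d ≤ κ)
    (i : Fin (2 ^ (κ - d))) :
    levelListSize κ n m p L d hd i = Nat.card {ℓ : Fin (2 ^ d) → Fin n //
      PassesFilters (kTreeWindow m p) d (extendByZero fun r => L (blockIdx d hd i r) (ℓ r))} :=
  Nat.card_congr <| Equiv.subtypeEquivRight fun ℓ => forall₂_congr fun t ht =>
    forall₂_congr fun j hj => by rw [indicator_sum_eq_blockSum (mem_Icc.mp ht).2 hj, kTreeWindow_eq]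

lemma blockIdx_injective {κ d : ℕ} (hd : d ≤ κ) (i : Fin (2 ^ (κ - d))) :
    Function.Injective (blockIdx d hd i) := fun r₁ r₂ h =>
  Fin.ext (by simpa [blockIdx] using congrArg Fin.val h)

lemma sum_levelListSize_div_card (κ n m : ℕ) (p : ℝ) (d : ℕ) (hd : d ≤ κ) (i : Fin (2 ^ (κ - d))) :
    (∑ L : Fin (2 ^ κ) → Fin n → intRange m,
        (levelListSize κ n m p (fun a b => L a b) d hd i : ℝ)) /
      Fintype.card (Fin (2 ^ κ) → Fin n → intRange m) =
      n ^ 2 ^ d * passProb (kTreeWindow m p) d := by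
  let Q : (Fin (2 ^ d) → intRange m) → Prop := fun g =>
    PassesFilters (kTreeWindow m p) d (extendByZero fun r => g r)
  let e : (Fin (2 ^ d) → Fin n) → Fin (2 ^ d) → Fin (2 ^ κ) × Fin n := fun ℓ r =>
    (blockIdx d hd i r, ℓ r)
  have he : ∀ ℓ, Function.Injective (e ℓ) := fun ℓ _ _ h =>
    blockIdx_injective hd i (congrArg Prod.fst h)
  -- each `ℓ` reads distinct coordinates of `L`, hence survives with probability `passProb`
  have hprob : ∀ ℓ, (Nat.card {L : Fin (2 ^ κ) → Fin n → intRange m //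
      Q (Function.uncurry L ∘ e ℓ)} : ℝ) / Fintype.card (Fin (2 ^ κ) → Fin n → intRange m) =
      passProb (kTreeWindow m p) d := fun ℓ => by
    have : Nonempty (intRange (m : ℝ)) := (intRange_nonempty m.cast_nonneg).coe_sort
    have hcard : Nat.card {L : Fin (2 ^ κ) → Fin n → intRange m // Q (Function.uncurry L ∘ e ℓ)} =
        Nat.card {f : Fin (2 ^ κ) × Fin n → intRange m // Q (f ∘ e ℓ)} :=
      Nat.card_congr ((Equiv.curry _ _ _).symm.subtypeEquiv fun L => Iff.rfl)
    rw [hcard, ← Nat.card_eq_fintype_card, ← Nat.card_congr (Equiv.curry _ _ _),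
      card_subtype_comp_div_card (he ℓ) Q, passProb, kTreeWindow_zero, Nat.card_fun,
      Nat.card_eq_fintype_card (α := intRange m), Fintype.card_coe, Nat.card_fin,
      Nat.cast_pow]
    rfl
  simp only [levelListSize_eq]
  rw [← Nat.cast_sum, sum_card_subtype_comm, Nat.cast_sum, sum_div]
  refine (sum_congr rfl fun ℓ _ => hprob ℓ).trans ?_
  simp

lemma expTotalSize_eq (κ n m : ℕ) (p : ℝ) :
    expTotalSize κ n m p =
      ∑ d ∈ range (κ + 1), 2 ^ (κ - d) * n ^ 2 ^ d * passProb (kTreeWindow m p) d := by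
  rw [expTotalSize]
  simp only [totalSize, Nat.cast_sum]
  rw [sum_comm, sum_div, ← sum_attach (range (κ + 1))]
  refine sum_congr rfl fun d _ => ?_
  rw [sum_comm, sum_div]
  simp only [sum_levelListSize_div_card, sum_const, card_univ, Fintype.card_fin, nsmul_eq_mul]
  push_cast
  ring

lemma sum_range_eq_mul_one_add_sum (κ n : ℕ) (p : ℝ) :
    ∑ d ∈ range (κ + 1), (2 : ℝ) ^ (κ - d) * n ^ 2 ^ d * p ^ (2 ^ d - 1) =
      2 ^ κ * n * (1 + ∑ d ∈ Icc 1 κ, (p * n) ^ (2 ^ d - 1) / (2 : ℝ) ^ d) := by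
  rw [range_eq_Ico, sum_eq_sum_Ico_succ_bot (by omega : 0 < κ + 1), zero_add,
    Ico_add_one_right_eq_Icc, mul_add, mul_sum]
  congr 1
  · simp
  refine sum_congr rfl fun d hd => ?_
  have h2 : (2 : ℝ) ^ κ = 2 ^ (κ - d) * 2 ^ d := by
    rw [← pow_add, Nat.sub_add_cancel (mem_Icc.mp hd).2]
  have hn : (n : ℝ) ^ 2 ^ d = n * n ^ (2 ^ d - 1) := by
    rw [← pow_succ', Nat.sub_add_cancel Nat.one_le_two_pow]
  rw [h2, hn, mul_pow]
  field_simp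

end KTree

open KTree in
theorem kTree_complexity_bounds_general
    (κ n m : ℕ)
    (hm' : (30 : ℝ) ^ (κ + 1) < m)
    (p c : ℝ) (hp : p = (m : ℝ) ^ (-(1 / ((κ : ℝ) + 1)))) (hc : c = p * n) :
    (2 ^ κ : ℝ) * n * (1 + ∑ d ∈ Finset.Icc 1 κ, c ^ (2 ^ d - 1) / (2 : ℝ) ^ d) *
        (1 - 37 * p) ^ (2 ^ κ - 1)
      ≤ expTotalSize κ n m p ∧
    expTotalSize κ n m p
      ≤ (2 ^ κ : ℝ) * n * (1 + ∑ d ∈ Finset.Icc 1 κ, c ^ (2 ^ d - 1) / (2 : ℝ) ^ d) *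
        (1 + 37 * p) ^ (2 ^ κ - 1) := by
  have hm₀ : (0 : ℝ) < m := lt_trans (by positivity) hm'
  have hmp : (m : ℝ) * p ^ (κ + 1) = 1 := by
    rw [hp, ← Real.rpow_natCast, ← Real.rpow_mul hm₀.le, Nat.cast_succ,
      neg_mul, one_div, inv_mul_cancel₀ (by positivity), Real.rpow_neg_one, mul_inv_cancel₀ hm₀.ne']
  have hp₀ : 0 < p := hp ▸ Real.rpow_pos_of_pos hm₀ _
  have hp30 : p < 1 / 30 := by
    refine (pow_lt_pow_iff_left₀ hp₀.le (by norm_num) (by omega : κ + 1 ≠ 0)).mp ?_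
    rw [div_pow, one_pow, lt_div_iff₀ (by positivity)]
    linarith [mul_lt_mul_of_pos_left hm' (pow_pos hp₀ (κ + 1))]
  rw [expTotalSize_eq, hc, ← sum_range_eq_mul_one_add_sum, Finset.sum_mul, Finset.sum_mul]
  have hbounds := fun d (hd : d ∈ Finset.range (κ + 1)) =>
    passProb_kTreeWindow_bounds hp₀ hp30 hmp.ge (Nat.lt_succ_iff.mp (Finset.mem_range.mp hd))
  constructor <;> refine Finset.sum_le_sum fun d hd => ?_
  · rw [mul_assoc]
    exact mul_le_mul_of_nonneg_left (hbounds d hd).1 (by positivity)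
  · rw [mul_assoc _ (p ^ _)]
    exact mul_le_mul_of_nonneg_left (hbounds d hd).2 (by positivity)

theorem kTree_complexity_bounds
    (κ n m : ℕ) (hκ : 2 ≤ κ) (hn : 0 < n) (hm : 0 < m)
    (hm' : (30 : ℝ) ^ (κ + 1) < m)
    (p c : ℝ) (hp : p = (m : ℝ) ^ (-(1 / ((κ : ℝ) + 1)))) (hc : c = p * n) :
    (2 ^ κ : ℝ) * n * (1 + ∑ d ∈ Finset.Icc 1 κ, c ^ (2 ^ d - 1) / (2 : ℝ) ^ d) *
        (1 - 37 * p) ^ (2 ^ κ - 1)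
      ≤ expTotalSize κ n m p ∧
    expTotalSize κ n m p
      ≤ (2 ^ κ : ℝ) * n * (1 + ∑ d ∈ Finset.Icc 1 κ, c ^ (2 ^ d - 1) / (2 : ℝ) ^ d) *
        (1 + 37 * p) ^ (2 ^ κ - 1) :=
  kTree_complexity_bounds_general κ n m hm' p c hp hc
end

section
/- Let k ≥ 2 be a power of 2, let n, m be positive integers, and let p ∈ (0,1] satisfy m > 7k, p·k > (7/m)^(k/2 − 1), m·p^(log k) > 30, and p < 1/30. Then (n^k p^k)/(m·p^(log k + 1)) · (1 − p)^(k−1) · (1 − 35/(m·p^(log k)))^(k−1) ≤ E[C] ≤ (n^k p^k)/(m·p^(log k + 1)) · (1 + p)^(k−1) · (1 + 35/(m·p^(log k)))^(k−1). -/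
/-- A tuple `ℓ ∈ [n]^k` (with `k = 2^κ`) is *successful* for the lists `L` and filtering
parameter `p` if every partial block sum at level `d ∈ {1,…,κ}` lies in `⟨m·p^d⟩`, and the
total sum is `0`. -/
def Successful (κ n m : ℕ) (p : ℝ) (L : Fin (2 ^ κ) → Fin n → ℤ)
    (ℓ : Fin (2 ^ κ) → Fin n) : Prop :=
  (∀ d ∈ Finset.Icc 1 κ, ∀ i < 2 ^ (κ - d),
      (∑ j : Fin (2 ^ κ),
          if i * 2 ^ d ≤ (j : ℕ) ∧ (j : ℕ) < (i + 1) * 2 ^ d then L j (ℓ j) else 0)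
        ∈ intRange ((m : ℝ) * p ^ d)) ∧
    (∑ j : Fin (2 ^ κ), L j (ℓ j)) = 0

/-- `E[C]`: the expected number of successful tuples, over `k = 2^κ` lists of `n`
independent uniform entries from `⟨m⟩`. -/
noncomputable def expC (κ n m : ℕ) (p : ℝ) : ℝ :=
  (∑ L : Fin (2 ^ κ) → Fin n → ↥(intRange (m : ℝ)),
      (Nat.card {ℓ : Fin (2 ^ κ) → Fin n //
          Successful κ n m p (fun i j => (L i j : ℤ)) ℓ} : ℝ)) /
    (Fintype.card (Fin (2 ^ κ) → Fin n → ↥(intRange (m : ℝ))) : ℝ)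

/-!
For fixed indices `ℓ` the entries `L_j[ℓ_j]` are independent and uniform on `⟨m⟩`, so
`E[C] = n^k · A / |⟨m⟩|^k`, where `A` counts the tuples in `⟨m⟩^k` that pass every filter and sum
to `0`. Cutting a tuple of length `2^(d+1)` into halves shows that the number `N_{d+1}(s)` of
such tuples with sum `s ∈ ⟨m p^(d+1)⟩` is the convolution `∑_{t ∈ ⟨m p^d⟩} N_d(t) N_d(s - t)`.
With `θ = 1/(m p^κ)` we have `|⟨m p^d⟩| ≤ m p^d (1 + θ)`, and for `s ∈ ⟨m p^(d+1)⟩` at least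
`m p^d (1 - p)(1 - θ)` values `t` keep both `t` and `s - t` in `⟨m p^d⟩`; so by induction `N_d`
lies between `(m c p)^(2^d - 1) / p^d` for `c = (1 - p)(1 - θ)` and for `c = 1 + θ`. This gives
the factors `(1 + θ)^(k-1)` and `(1 - p)^(k-1) (1 - θ)^(2k-1)`, and the latter dominates
`(1 - p)^(k-1) (1 - 35θ)^(k-1)` because `(1 - θ)^3 ≥ 1 - 35θ` and `k - 1` is odd.
-/

open Finset

lemma mem_intRange {x : ℝ} {t : ℤ} : t ∈ intRange x ↔ -⌊x / 2⌋ ≤ t ∧ t ≤ ⌊x / 2⌋ :=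
  Finset.mem_Icc

lemma zero_mem_intRange {x : ℝ} (hx : 0 ≤ x) : (0 : ℤ) ∈ intRange x := by
  have : 0 ≤ ⌊x / 2⌋ := Int.floor_nonneg.2 (by positivity)
  exact mem_intRange.2 ⟨by omega, this⟩

lemma card_intRange_le {x : ℝ} (hx : 0 ≤ x) : (#(intRange x) : ℝ) ≤ x + 1 := by
  have h0 : 0 ≤ ⌊x / 2⌋ := Int.floor_nonneg.2 (by positivity)
  have hcard : (#(intRange x) : ℤ) = 2 * ⌊x / 2⌋ + 1 := by
    rw [intRange, Int.card_Icc]; omega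
  have hcard' : (#(intRange x) : ℝ) = 2 * ⌊x / 2⌋ + 1 := by exact_mod_cast hcard
  linarith [Int.floor_le (x / 2)]

lemma card_intRange_natCast (m : ℕ) : #(intRange (m : ℝ)) = 2 * (m / 2) + 1 := by
  have hfloor : ⌊(m : ℝ) / 2⌋ = ((m / 2 : ℕ) : ℤ) := by
    rw [← Nat.cast_ofNat, Int.floor_div_natCast, Int.floor_natCast]; omega
  rw [intRange, hfloor, Int.card_Icc]
  omega

lemma le_card_filter_sub_mem_intRange {x y : ℝ} {s : ℤ} (hyx : y ≤ x) (hs : s ∈ intRange y) :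
    x - 1 - y / 2 ≤ #{t ∈ intRange x | s - t ∈ intRange x} := by
  have hGF : ⌊y / 2⌋ ≤ ⌊x / 2⌋ := Int.floor_mono (by linarith)
  rw [mem_intRange] at hs
  have hfilter : {t ∈ intRange x | s - t ∈ intRange x} =
      Icc (max (-⌊x / 2⌋) (s - ⌊x / 2⌋)) (min ⌊x / 2⌋ (s + ⌊x / 2⌋)) := by
    ext t
    simp only [mem_filter, mem_intRange, mem_Icc]
    omega
  have hcard : 2 * ⌊x / 2⌋ + 1 - ⌊y / 2⌋ ≤ (#{t ∈ intRange x | s - t ∈ intRange x} : ℤ) := by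
    rw [hfilter, Int.card_Icc]
    omega
  have hcard' : ((2 * ⌊x / 2⌋ + 1 - ⌊y / 2⌋ : ℤ) : ℝ) ≤ #{t ∈ intRange x | s - t ∈ intRange x} :=
    by exact_mod_cast hcard
  push_cast at hcard'
  linarith [Int.sub_one_lt_floor (x / 2), Int.floor_le (y / 2)]

def halves (α : Type*) (d : ℕ) :
    (Fin (2 ^ d) → α) × (Fin (2 ^ d) → α) ≃ (Fin (2 ^ (d + 1)) → α) :=
  (Fin.appendEquiv _ _).trans (Equiv.arrowCongr (finCongr (by ring)) (Equiv.refl α))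

lemma sum_halves {α M : Type*} [AddCommMonoid M] {d : ℕ} (F : ℕ → α → M)
    (q : (Fin (2 ^ d) → α) × (Fin (2 ^ d) → α)) :
    ∑ j : Fin (2 ^ (d + 1)), F j (halves α d q j) =
      ∑ i : Fin (2 ^ d), F i (q.1 i) + ∑ i : Fin (2 ^ d), F (2 ^ d + i) (q.2 i) := by
  rw [← (finCongr (by ring : 2 ^ d + 2 ^ d = 2 ^ (d + 1))).sum_comp, Fin.sum_univ_add]
  simp [halves, -Fin.natAdd_eq_addNat]

lemma comp_halves {α β : Type*} {d : ℕ} (f : α → β) (q : (Fin (2 ^ d) → α) × (Fin (2 ^ d) → α)) :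
    f ∘ halves α d q = halves β d (f ∘ q.1, f ∘ q.2) := by
  apply (halves β d).symm.injective
  simp [halves, -Fin.natAdd_eq_addNat]

section TreeFilter

variable (m : ℕ) (p : ℝ)

def blockSum {N : ℕ} (x : Fin N → ℤ) (l i : ℕ) : ℤ :=
  ∑ j : Fin N, if i * 2 ^ l ≤ (j : ℕ) ∧ (j : ℕ) < (i + 1) * 2 ^ l then x j else 0

lemma blockSum_eq_sum {d : ℕ} (x : Fin (2 ^ d) → ℤ) : blockSum x d 0 = ∑ j, x j :=
  sum_congr rfl fun j _ => if_pos (by simp)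

lemma blockSum_halves_left {d l i : ℕ} (hl : l ≤ d) (hi : i < 2 ^ (d - l))
    (a b : Fin (2 ^ d) → ℤ) : blockSum (halves ℤ d (a, b)) l i = blockSum a l i := by
  have hpow : 2 ^ (d - l) * 2 ^ l = 2 ^ d := by rw [← pow_add, Nat.sub_add_cancel hl]
  have hend : (i + 1) * 2 ^ l ≤ 2 ^ d := hpow ▸ Nat.mul_le_mul_right _ hi
  rw [blockSum, sum_halves fun j v => if i * 2 ^ l ≤ j ∧ j < (i + 1) * 2 ^ l then v else 0,
    add_eq_left.2 (sum_eq_zero fun j _ => if_neg (by omega))]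
  rfl

lemma blockSum_halves_right {d l : ℕ} (hl : l ≤ d) (i : ℕ)
    (a b : Fin (2 ^ d) → ℤ) :
    blockSum (halves ℤ d (a, b)) l (i + 2 ^ (d - l)) = blockSum b l i := by
  have hpow : 2 ^ (d - l) * 2 ^ l = 2 ^ d := by rw [← pow_add, Nat.sub_add_cancel hl]
  have hstart : (i + 2 ^ (d - l)) * 2 ^ l = i * 2 ^ l + 2 ^ d := by rw [add_mul, hpow]
  have hend : (i + 2 ^ (d - l) + 1) * 2 ^ l = (i + 1) * 2 ^ l + 2 ^ d := by
    rw [add_right_comm, add_mul, hpow]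
  rw [blockSum, sum_halves fun j v =>
      if (i + 2 ^ (d - l)) * 2 ^ l ≤ j ∧ j < (i + 2 ^ (d - l) + 1) * 2 ^ l then v else 0,
    sum_eq_zero fun j _ => if_neg (by omega), zero_add]
  exact sum_congr rfl fun j _ => if_congr (by omega) rfl rfl

def IsTreeFiltered (d : ℕ) (x : Fin (2 ^ d) → ℤ) : Prop :=
  ∀ l ∈ Icc 1 d, ∀ i < 2 ^ (d - l), blockSum x l i ∈ intRange ((m : ℝ) * p ^ l)

variable {m p}

lemma forall_blockSum_halves_iff {d l : ℕ} (hl : l ≤ d) (a b : Fin (2 ^ d) → ℤ) (I : Finset ℤ) :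
    (∀ i < 2 ^ (d + 1 - l), blockSum (halves ℤ d (a, b)) l i ∈ I) ↔
      (∀ i < 2 ^ (d - l), blockSum a l i ∈ I) ∧ ∀ i < 2 ^ (d - l), blockSum b l i ∈ I := by
  rw [show d + 1 - l = d - l + 1 by omega, pow_succ, mul_two]
  constructor
  · intro h
    refine ⟨fun i hi => ?_, fun i hi => ?_⟩
    · rw [← blockSum_halves_left hl hi a b]; exact h i (by omega)
    · rw [← blockSum_halves_right hl i a b]; exact h _ (by omega)
  · rintro ⟨ha, hb⟩ i hi
    rcases lt_or_ge i (2 ^ (d - l)) with hleft | hright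
    · rw [blockSum_halves_left hl hleft]; exact ha i hleft
    · obtain ⟨i, rfl⟩ := Nat.exists_eq_add_of_le' hright
      rw [blockSum_halves_right hl]; exact hb i (by omega)

lemma isTreeFiltered_halves_iff {d : ℕ} (a b : Fin (2 ^ d) → ℤ) :
    IsTreeFiltered m p (d + 1) (halves ℤ d (a, b)) ↔
      IsTreeFiltered m p d a ∧ IsTreeFiltered m p d b ∧
        ∑ i, a i + ∑ i, b i ∈ intRange ((m : ℝ) * p ^ (d + 1)) := by
  have htop : blockSum (halves ℤ d (a, b)) (d + 1) 0 = ∑ i, a i + ∑ i, b i := by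
    rw [blockSum_eq_sum, sum_halves fun _ v => v]
  have hlevels : (∀ l ∈ Icc 1 d, ∀ i < 2 ^ (d + 1 - l),
      blockSum (halves ℤ d (a, b)) l i ∈ intRange ((m : ℝ) * p ^ l)) ↔
        IsTreeFiltered m p d a ∧ IsTreeFiltered m p d b := by
    rw [IsTreeFiltered, IsTreeFiltered, ← forall₂_and]
    exact forall₂_congr fun l hl => forall_blockSum_halves_iff (mem_Icc.1 hl).2 a b _
  rw [IsTreeFiltered, ← insert_Icc_right_eq_Icc_add_one (by omega), forall_mem_insert, hlevels]
  simp only [Nat.sub_self, pow_zero, Nat.lt_one_iff, forall_eq, htop]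
  tauto

end TreeFilter

section Counting

variable (m : ℕ) (p : ℝ)

open Classical in
noncomputable def filteredTuples (d : ℕ) (s : ℤ) : Finset (Fin (2 ^ d) → intRange (m : ℝ)) :=
  {y | IsTreeFiltered m p d (fun j => y j) ∧ ∑ j, (y j : ℤ) = s}

variable {m p}

lemma mem_filteredTuples {d : ℕ} {s : ℤ} {y : Fin (2 ^ d) → intRange (m : ℝ)} :
    y ∈ filteredTuples m p d s ↔ IsTreeFiltered m p d (fun j => y j) ∧ ∑ j, (y j : ℤ) = s := by
  simp [filteredTuples]

lemma mem_intRange_of_mem_filteredTuples {d : ℕ} {s : ℤ} {y : Fin (2 ^ d) → intRange (m : ℝ)}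
    (hy : y ∈ filteredTuples m p d s) : s ∈ intRange ((m : ℝ) * p ^ d) := by
  obtain ⟨hfilt, rfl⟩ := mem_filteredTuples.1 hy
  cases d with
  | zero => simp
  | succ d => simpa [blockSum_eq_sum] using hfilt (d + 1) (by simp) 0 (by simp)

lemma card_filteredTuples_zero_le (s : ℤ) : #(filteredTuples m p 0 s) ≤ 1 := by
  refine card_le_one.2 fun y hy z hz => funext fun j => Subtype.ext ?_
  have hy' := (mem_filteredTuples.1 hy).2
  have hz' := (mem_filteredTuples.1 hz).2
  simp only [Nat.pow_zero, Fin.sum_univ_one] at hy' hz'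
  rw [Subsingleton.elim (α := Fin 1) j 0, hy', hz']

lemma one_le_card_filteredTuples_zero {s : ℤ} (hs : s ∈ intRange ((m : ℝ) * p ^ 0)) :
    1 ≤ #(filteredTuples m p 0 s) := by
  rw [pow_zero, mul_one] at hs
  refine one_le_card.2 ⟨fun _ => ⟨s, hs⟩, mem_filteredTuples.2 ⟨?_, by simp⟩⟩
  simp [IsTreeFiltered]

lemma halves_mem_filteredTuples_iff {d : ℕ} {s : ℤ} (hs : s ∈ intRange ((m : ℝ) * p ^ (d + 1)))
    (a b : Fin (2 ^ d) → intRange (m : ℝ)) :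
    halves _ d (a, b) ∈ filteredTuples m p (d + 1) s ↔
      a ∈ filteredTuples m p d (∑ i, (a i : ℤ)) ∧
        b ∈ filteredTuples m p d (s - ∑ i, (a i : ℤ)) := by
  have hcoe : (fun j => (halves (intRange (m : ℝ)) d (a, b) j : ℤ)) =
      halves ℤ d ((fun i => (a i : ℤ)), fun i => (b i : ℤ)) :=
    comp_halves Subtype.val (a, b)
  rw [mem_filteredTuples, mem_filteredTuples, mem_filteredTuples, hcoe, isTreeFiltered_halves_iff]
  simp only [sum_halves fun _ v => v, and_true]
  constructor
  · rintro ⟨⟨ha, hb, -⟩, hsum⟩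
    exact ⟨ha, hb, by omega⟩
  · rintro ⟨ha, hb, hsum⟩
    refine ⟨⟨ha, hb, ?_⟩, by omega⟩
    rwa [hsum, add_sub_cancel]

lemma card_filteredTuples_succ {d : ℕ} {s : ℤ} (hs : s ∈ intRange ((m : ℝ) * p ^ (d + 1))) :
    #(filteredTuples m p (d + 1) s) =
      ∑ t ∈ intRange ((m : ℝ) * p ^ d),
        #(filteredTuples m p d t) * #(filteredTuples m p d (s - t)) := by
  classical
  set U : Finset ((Fin (2 ^ d) → intRange (m : ℝ)) × (Fin (2 ^ d) → intRange (m : ℝ))) :=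
    {q | halves _ d q ∈ filteredTuples m p (d + 1) s}
  have hmaps : Set.MapsTo (fun q : (Fin (2 ^ d) → intRange (m : ℝ)) × _ => ∑ i, (q.1 i : ℤ)) U
      (intRange ((m : ℝ) * p ^ d)) :=
    fun q hq => mem_intRange_of_mem_filteredTuples
      ((halves_mem_filteredTuples_iff hs q.1 q.2).1 (by simpa [U] using hq)).1
  rw [card_equiv (halves _ d).symm (s := filteredTuples m p (d + 1) s) (t := U) (by simp [U]),
    card_eq_sum_card_fiberwise hmaps]
  refine sum_congr rfl fun t _ => ?_
  rw [← card_product]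
  congr 1
  ext ⟨a, b⟩
  simp only [U, mem_filter, mem_univ, true_and, mem_product, halves_mem_filteredTuples_iff hs]
  constructor
  · rintro ⟨hab, rfl⟩
    exact hab
  · rintro ⟨ha, hb⟩
    obtain rfl := (mem_filteredTuples.1 ha).2
    exact ⟨⟨ha, hb⟩, rfl⟩

lemma successful_iff_mem_filteredTuples {κ n : ℕ} (L : Fin (2 ^ κ) → Fin n → intRange (m : ℝ))
    (ℓ : Fin (2 ^ κ) → Fin n) :
    Successful κ n m p (fun i j => (L i j : ℤ)) ℓ ↔ (fun j => L j (ℓ j)) ∈ filteredTuples m p κ 0 :=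
  mem_filteredTuples.symm

end Counting

lemma card_filter_fst_mem_div_card {α β γ : Type*} [Fintype α] [Fintype β] [Fintype γ]
    [Nonempty γ] [DecidableEq β] (e : α ≃ β × γ) (T : Finset β) :
    (#{a | (e a).1 ∈ T} : ℝ) / Fintype.card α = #T / Fintype.card β := by
  have hcard : #{a | (e a).1 ∈ T} = #T * Fintype.card γ := by
    rw [card_equiv e (t := T ×ˢ univ) (by simp), card_product, card_univ]
  rw [hcard, Fintype.card_congr e, Fintype.card_prod]
  have : (Fintype.card γ : ℝ) ≠ 0 := Nat.cast_ne_zero.2 Fintype.card_ne_zero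
  push_cast
  field_simp

lemma expC_eq (κ n m : ℕ) (p : ℝ) :
    expC κ n m p = n ^ 2 ^ κ * #(filteredTuples m p κ 0) / (#(intRange (m : ℝ)) : ℝ) ^ 2 ^ κ := by
  classical
  have : Nonempty (intRange (m : ℝ)) := ⟨⟨0, zero_mem_intRange m.cast_nonneg⟩⟩
  have hmarginal (ℓ : Fin (2 ^ κ) → Fin n) :
      (#{L : Fin (2 ^ κ) → Fin n → intRange (m : ℝ) |
          Successful κ n m p (fun i j => (L i j : ℤ)) ℓ} : ℝ) /
        Fintype.card (Fin (2 ^ κ) → Fin n → intRange (m : ℝ)) =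
      #(filteredTuples m p κ 0) / (#(intRange (m : ℝ)) : ℝ) ^ 2 ^ κ := by
    have := card_filter_fst_mem_div_card ((Equiv.piCongrRight fun i =>
      Equiv.funSplitAt (ℓ i) (intRange (m : ℝ))).trans (Equiv.arrowProdEquivProdArrow _ _ _))
      (filteredTuples m p κ 0)
    simpa [successful_iff_mem_filteredTuples] using this
  have hswap : ∑ L : Fin (2 ^ κ) → Fin n → intRange (m : ℝ),
      #{ℓ | Successful κ n m p (fun i j => (L i j : ℤ)) ℓ} =
        ∑ ℓ : Fin (2 ^ κ) → Fin n, #{L : Fin (2 ^ κ) → Fin n → intRange (m : ℝ) |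
          Successful κ n m p (fun i j => (L i j : ℤ)) ℓ} := by
    simp only [card_filter]
    exact sum_comm
  rw [expC]
  simp only [Nat.card_eq_fintype_card, Fintype.card_subtype]
  rw [← Nat.cast_sum, hswap, Nat.cast_sum, sum_div, sum_congr rfl fun ℓ _ => hmarginal ℓ,
    sum_const, card_univ, Fintype.card_fun, Fintype.card_fin, Fintype.card_fin, nsmul_eq_mul]
  push_cast
  ring

-- `μ ^ (2 ^ d - 1) * p ^ (2 ^ d - d - 1)`, written so that no truncated subtraction
-- occurs in the exponent of `p`.
noncomputable def treeBound (μ p : ℝ) (d : ℕ) : ℝ := (μ * p) ^ (2 ^ d - 1) / p ^ d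

lemma treeBound_zero (μ p : ℝ) : treeBound μ p 0 = 1 := by
  simp [treeBound]

lemma treeBound_succ (μ : ℝ) {p : ℝ} (hp : p ≠ 0) (d : ℕ) :
    treeBound μ p (d + 1) = μ * p ^ d * treeBound μ p d ^ 2 := by
  have hexp : 2 ^ (d + 1) - 1 = 2 * (2 ^ d - 1) + 1 := by
    have := Nat.one_le_two_pow (n := d)
    rw [pow_succ]
    omega
  rw [treeBound, treeBound, hexp, pow_succ, pow_mul]
  field_simp
  ring

lemma treeBound_nonneg {μ p : ℝ} (hμ : 0 ≤ μ) (hp : 0 ≤ p) (d : ℕ) : 0 ≤ treeBound μ p d := by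
  unfold treeBound
  positivity

section Bounds

variable {κ n m : ℕ} {p θ : ℝ}

lemma pos_of_one_le_mul_mul_pow (hp0 : 0 < p) (hθ : 1 ≤ θ * (m * p ^ κ)) :
    0 < θ ∧ (0 : ℝ) < m := by
  have hm : (0 : ℝ) < m := Nat.cast_pos.2 (Nat.pos_of_ne_zero fun h => by norm_num [h] at hθ)
  exact ⟨(pos_iff_pos_of_mul_pos (b := (m : ℝ) * p ^ κ) (by linarith)).2 (by positivity), hm⟩

lemma one_le_mul_mul_pow (hp0 : 0 < p) (hp1 : p ≤ 1) (hθ : 1 ≤ θ * (m * p ^ κ)) {d : ℕ}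
    (hd : d ≤ κ) : 1 ≤ θ * (m * p ^ d) :=
  hθ.trans (mul_le_mul_of_nonneg_left (mul_le_mul_of_nonneg_left
    (pow_le_pow_of_le_one hp0.le hp1 hd) m.cast_nonneg) (pos_of_one_le_mul_mul_pow hp0 hθ).1.le)

lemma card_filteredTuples_le (hp0 : 0 < p) (hp1 : p ≤ 1) (hθ : 1 ≤ θ * (m * p ^ κ)) {d : ℕ}
    (hd : d ≤ κ) (s : ℤ) : (#(filteredTuples m p d s) : ℝ) ≤ treeBound (m * (1 + θ)) p d := by
  have hθ0 := (pos_of_one_le_mul_mul_pow hp0 hθ).1.le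
  induction d generalizing s with
  | zero =>
    rw [treeBound_zero]
    exact_mod_cast card_filteredTuples_zero_le s
  | succ d ih =>
    have hB := treeBound_nonneg (μ := m * (1 + θ)) (by positivity) hp0.le d
    by_cases hs : s ∈ intRange ((m : ℝ) * p ^ (d + 1))
    · have hI : (#(intRange ((m : ℝ) * p ^ d)) : ℝ) ≤ m * (1 + θ) * p ^ d := by
        have := one_le_mul_mul_pow hp0 hp1 hθ (d.le_succ.trans hd)
        linarith [card_intRange_le (x := (m : ℝ) * p ^ d) (by positivity)]
      rw [card_filteredTuples_succ hs, treeBound_succ _ hp0.ne']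
      push_cast
      calc ∑ t ∈ intRange ((m : ℝ) * p ^ d),
            (#(filteredTuples m p d t) : ℝ) * #(filteredTuples m p d (s - t))
          ≤ ∑ _t ∈ intRange ((m : ℝ) * p ^ d), treeBound (m * (1 + θ)) p d ^ 2 :=
            sum_le_sum fun t _ => by
              rw [sq]
              exact mul_le_mul (ih (by omega) t) (ih (by omega) _) (by positivity) hB
        _ ≤ m * (1 + θ) * p ^ d * treeBound (m * (1 + θ)) p d ^ 2 := by
            rw [sum_const, nsmul_eq_mul]
            exact mul_le_mul_of_nonneg_right hI (sq_nonneg _)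
    · rw [card_eq_zero.2 (eq_empty_of_forall_notMem fun y hy =>
        hs (mem_intRange_of_mem_filteredTuples hy))]
      exact_mod_cast treeBound_nonneg (by positivity) hp0.le _

lemma le_card_filteredTuples (hp0 : 0 < p) (hp1 : p ≤ 1) (hθ : 1 ≤ θ * (m * p ^ κ))
    (hθ2 : θ ≤ 1 / 2) {d : ℕ} (hd : d ≤ κ) {s : ℤ} (hs : s ∈ intRange ((m : ℝ) * p ^ d)) :
    treeBound (m * ((1 - p) * (1 - θ))) p d ≤ #(filteredTuples m p d s) := by
  induction d generalizing s with
  | zero =>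
    rw [treeBound_zero]
    exact_mod_cast one_le_card_filteredTuples_zero hs
  | succ d ih =>
    have hμ : 0 ≤ (m : ℝ) * ((1 - p) * (1 - θ)) :=
      mul_nonneg m.cast_nonneg (mul_nonneg (by linarith) (by linarith))
    have hB := treeBound_nonneg hμ hp0.le d
    have hO : (m : ℝ) * ((1 - p) * (1 - θ)) * p ^ d ≤
        #{t ∈ intRange ((m : ℝ) * p ^ d) | s - t ∈ intRange ((m : ℝ) * p ^ d)} := by
      have hlevel := one_le_mul_mul_pow hp0 hp1 hθ (d.le_succ.trans hd)
      have hx : 0 ≤ (m : ℝ) * p ^ d := by positivity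
      refine le_trans ?_ (le_card_filter_sub_mem_intRange ?_ hs)
      · rw [pow_succ]
        nlinarith [mul_nonneg (mul_nonneg hx hp0.le) (by linarith : (0 : ℝ) ≤ 1 / 2 - θ)]
      · rw [pow_succ, ← mul_assoc]
        exact mul_le_of_le_one_right hx hp1
    rw [card_filteredTuples_succ hs, treeBound_succ _ hp0.ne']
    push_cast
    calc (m : ℝ) * ((1 - p) * (1 - θ)) * p ^ d * treeBound (m * ((1 - p) * (1 - θ))) p d ^ 2
        ≤ ∑ _t ∈ intRange ((m : ℝ) * p ^ d) with s - _t ∈ intRange ((m : ℝ) * p ^ d),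
            treeBound (m * ((1 - p) * (1 - θ))) p d ^ 2 := by
          rw [sum_const, nsmul_eq_mul]
          exact mul_le_mul_of_nonneg_right hO (sq_nonneg _)
      _ ≤ ∑ t ∈ intRange ((m : ℝ) * p ^ d) with s - t ∈ intRange ((m : ℝ) * p ^ d),
            (#(filteredTuples m p d t) : ℝ) * #(filteredTuples m p d (s - t)) :=
          sum_le_sum fun t ht => by
            rw [sq]
            exact mul_le_mul (ih (by omega) (mem_filter.1 ht).1) (ih (by omega) (mem_filter.1 ht).2)
              hB (by positivity)
      _ ≤ ∑ t ∈ intRange ((m : ℝ) * p ^ d),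
            (#(filteredTuples m p d t) : ℝ) * #(filteredTuples m p d (s - t)) :=
          sum_le_sum_of_subset_of_nonneg (filter_subset _ _) fun _ _ _ => by positivity

lemma expC_le (hp0 : 0 < p) (hp1 : p ≤ 1) (hθ : 1 ≤ θ * (m * p ^ κ)) :
    expC κ n m p ≤ (n : ℝ) ^ 2 ^ κ * p ^ 2 ^ κ / (m * p ^ (κ + 1)) * (1 + θ) ^ (2 ^ κ - 1) := by
  obtain ⟨hθ0, hm⟩ := pos_of_one_le_mul_mul_pow hp0 hθ
  have hcard : (m : ℝ) ≤ #(intRange (m : ℝ)) := by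
    rw [card_intRange_natCast]
    exact_mod_cast (by omega : m ≤ 2 * (m / 2) + 1)
  have hcount := card_filteredTuples_le hp0 hp1 hθ le_rfl 0
  obtain ⟨e, he⟩ : ∃ e, 2 ^ κ = e + 1 := ⟨_, (Nat.succ_pred_eq_of_pos (Nat.two_pow_pos κ)).symm⟩
  rw [expC_eq]
  calc (n : ℝ) ^ 2 ^ κ * #(filteredTuples m p κ 0) / (#(intRange (m : ℝ)) : ℝ) ^ 2 ^ κ
      ≤ (n : ℝ) ^ 2 ^ κ * treeBound (m * (1 + θ)) p κ / (m : ℝ) ^ 2 ^ κ :=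
        div_le_div₀ (mul_nonneg (by positivity) (treeBound_nonneg (by positivity) hp0.le κ))
          (mul_le_mul_of_nonneg_left hcount (by positivity))
          (by positivity) (pow_le_pow_left₀ hm.le hcard _)
    _ = _ := by
        rw [treeBound, he, Nat.add_sub_cancel, mul_pow, mul_pow]
        field_simp
        ring

lemma le_expC (hp0 : 0 < p) (hp1 : p ≤ 1) (hθ : 1 ≤ θ * (m * p ^ κ)) (hθ2 : θ ≤ 1 / 2) :
    (n : ℝ) ^ 2 ^ κ * p ^ 2 ^ κ / (m * p ^ (κ + 1)) * (1 - p) ^ (2 ^ κ - 1) *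
      (1 - θ) ^ (2 * (2 ^ κ - 1) + 1) ≤ expC κ n m p := by
  have hm := (pos_of_one_le_mul_mul_pow hp0 hθ).2
  have hcard : (#(intRange (m : ℝ)) : ℝ) * (1 - θ) ≤ m := by
    have hθm : 1 ≤ θ * m := by simpa using one_le_mul_mul_pow hp0 hp1 hθ (Nat.zero_le κ)
    rw [card_intRange_natCast]
    have hle : ((2 * (m / 2) + 1 : ℕ) : ℝ) ≤ m + 1 := by
      exact_mod_cast (by omega : 2 * (m / 2) + 1 ≤ m + 1)
    nlinarith [mul_le_mul_of_nonneg_right hle (by linarith : (0 : ℝ) ≤ 1 - θ)]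
  have hcount := le_card_filteredTuples hp0 hp1 hθ hθ2 le_rfl
    (zero_mem_intRange (x := (m : ℝ) * p ^ κ) (by positivity))
  obtain ⟨e, he⟩ : ∃ e, 2 ^ κ = e + 1 := ⟨_, (Nat.succ_pred_eq_of_pos (Nat.two_pow_pos κ)).symm⟩
  have hScpos : (0 : ℝ) < #(intRange (m : ℝ)) := by
    rw [card_intRange_natCast]
    positivity
  rw [expC_eq]
  calc _ = (n : ℝ) ^ 2 ^ κ * treeBound (m * ((1 - p) * (1 - θ))) p κ * ((1 - θ) / m) ^ 2 ^ κ := by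
        rw [treeBound, he, Nat.add_sub_cancel]
        generalize 1 - p = a
        generalize 1 - θ = b
        simp only [div_pow, mul_pow]
        field_simp
        ring
    _ ≤ (n : ℝ) ^ 2 ^ κ * #(filteredTuples m p κ 0) * (1 / #(intRange (m : ℝ))) ^ 2 ^ κ := by
        have hfrac : (1 - θ) / m ≤ 1 / #(intRange (m : ℝ)) := by
          rw [div_le_div_iff₀ hm hScpos]
          linarith
        exact mul_le_mul (mul_le_mul_of_nonneg_left hcount (by positivity))
          (pow_le_pow_left₀ (div_nonneg (by linarith) hm.le) hfrac _)
          (pow_nonneg (div_nonneg (by linarith) hm.le) _) (by positivity)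
    _ = _ := by rw [one_div_pow, mul_one_div]

end Bounds

lemma one_sub_mul_pow_le_one_sub_pow {c θ : ℝ} {e : ℕ} (he : Odd e) (hc : 3 ≤ c) (hθ0 : 0 ≤ θ)
    (hθ1 : θ ≤ 1) : (1 - c * θ) ^ e ≤ (1 - θ) ^ (2 * e + 1) :=
  calc (1 - c * θ) ^ e ≤ ((1 - θ) ^ 3) ^ e :=
        he.pow_le_pow.2 (by nlinarith [mul_nonneg (mul_nonneg hθ0 hθ0) (by linarith : 0 ≤ 3 - θ)])
    _ = (1 - θ) ^ (3 * e) := (pow_mul _ _ _).symm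
    _ ≤ (1 - θ) ^ (2 * e + 1) :=
        pow_le_pow_of_le_one (by linarith) (by linarith) (by obtain ⟨k, rfl⟩ := he; omega)

theorem kTree_first_moment_bounds_general
    (κ n m : ℕ) (hκ : 1 ≤ κ)
    (p : ℝ) (hp0 : 0 < p) (hp1 : p ≤ 1)
    (h3 : (30 : ℝ) < (m : ℝ) * p ^ κ) :
    ((n : ℝ) ^ (2 ^ κ) * p ^ (2 ^ κ)) / ((m : ℝ) * p ^ (κ + 1)) * (1 - p) ^ (2 ^ κ - 1) *
        (1 - 35 / ((m : ℝ) * p ^ κ)) ^ (2 ^ κ - 1)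
      ≤ expC κ n m p ∧
    expC κ n m p
      ≤ ((n : ℝ) ^ (2 ^ κ) * p ^ (2 ^ κ)) / ((m : ℝ) * p ^ (κ + 1)) * (1 + p) ^ (2 ^ κ - 1) *
        (1 + 35 / ((m : ℝ) * p ^ κ)) ^ (2 ^ κ - 1) := by
  have hmp : 0 < (m : ℝ) * p ^ κ := by linarith
  set θ := ((m : ℝ) * p ^ κ)⁻¹ with hθ_def
  have hθ : 1 ≤ θ * (m * p ^ κ) := (inv_mul_cancel₀ hmp.ne').ge
  have hθ0 : 0 ≤ θ := inv_nonneg.2 hmp.le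
  have hθ30 : θ ≤ 1 / 30 := by
    rw [hθ_def, one_div]
    exact inv_anti₀ (by norm_num) h3.le
  have hodd : Odd (2 ^ κ - 1) :=
    Nat.Even.sub_odd Nat.one_le_two_pow (Nat.even_pow.2 ⟨even_two, by omega⟩) odd_one
  have hX : 0 ≤ (n : ℝ) ^ 2 ^ κ * p ^ 2 ^ κ / (m * p ^ (κ + 1)) * (1 - p) ^ (2 ^ κ - 1) := by
    have := pow_nonneg (sub_nonneg.2 hp1) (2 ^ κ - 1)
    positivity
  rw [div_eq_mul_inv 35, ← hθ_def]
  constructor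
  · exact (mul_le_mul_of_nonneg_left (one_sub_mul_pow_le_one_sub_pow hodd (by norm_num) hθ0
      (by linarith)) hX).trans (le_expC hp0 hp1 hθ (by linarith))
  · refine (expC_le hp0 hp1 hθ).trans ?_
    rw [mul_assoc _ ((1 + p) ^ _), ← mul_pow (1 + p)]
    exact mul_le_mul_of_nonneg_left (pow_le_pow_left₀ (by linarith) (by nlinarith) _)
      (by positivity)

theorem kTree_first_moment_bounds
    (κ n m : ℕ) (hκ : 1 ≤ κ) (hn : 0 < n) (hm : 0 < m)
    (p : ℝ) (hp0 : 0 < p) (hp1 : p ≤ 1)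
    (h1 : (7 : ℝ) * 2 ^ κ < m)
    (h2 : ((7 : ℝ) / m) ^ (2 ^ (κ - 1) - 1) < p * 2 ^ κ)
    (h3 : (30 : ℝ) < (m : ℝ) * p ^ κ)
    (h4 : p < 1 / 30) :
    ((n : ℝ) ^ (2 ^ κ) * p ^ (2 ^ κ)) / ((m : ℝ) * p ^ (κ + 1)) * (1 - p) ^ (2 ^ κ - 1) *
        (1 - 35 / ((m : ℝ) * p ^ κ)) ^ (2 ^ κ - 1)
      ≤ expC κ n m p ∧
    expC κ n m p
      ≤ ((n : ℝ) ^ (2 ^ κ) * p ^ (2 ^ κ)) / ((m : ℝ) * p ^ (κ + 1)) * (1 + p) ^ (2 ^ κ - 1) *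
        (1 + 35 / ((m : ℝ) * p ^ κ)) ^ (2 ^ κ - 1) :=
  kTree_first_moment_bounds_general κ n m hκ p hp0 hp1 h3
end
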